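/- arXiv:2403.10062 — 3 statements merged into one kernel-verified Lean document; each statement's English description precedes it below -/
import Mathlib

section
/- An n×m complex matrix A is an asymmetric Toeplitz matrix (constant along diagonals) if and only if its displacement ΔA = A - S_n A S_m* can be written as u ⊗ ε_0 + e_0 ⊗ v for some vectors u ∈ C^n and v ∈ C^m, where e_0, ε_0 are the first standard basis vectors of C^n and C^m. -/
open Matrix BigOperators

/-- Lower shift matrix: 1's on the subdiagonal. -/
noncomputable def Sh (n : ℕ) : Matrix (Fin n) (Fin n) ℂ :=
  Matrix.of fun i j => if (i : ℕ) = (j : ℕ) + 1 then 1 else 0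

/-- Rectangular identity matrix. -/
noncomputable def rId (n m : ℕ) : Matrix (Fin n) (Fin m) ℂ :=
  Matrix.of fun i j => if (i : ℕ) = (j : ℕ) then 1 else 0

/-- Reversal (flip) permutation matrix. -/
noncomputable def rev (n : ℕ) : Matrix (Fin n) (Fin n) ℂ :=
  Matrix.of fun i j => if (i : ℕ) + (j : ℕ) = n - 1 then 1 else 0

/-- Rank-one tensor x ⊗ y = x ȳᵀ. -/
noncomputable def oprod {n m : ℕ} (x : Fin n → ℂ) (y : Fin m → ℂ) : Matrix (Fin n) (Fin m) ℂ :=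
  Matrix.of fun i j => x i * star (y j)

/-- Displacement ΔA = A - Sₙ A Sₘ*. -/
noncomputable def dsp {n m : ℕ} (A : Matrix (Fin n) (Fin m) ℂ) : Matrix (Fin n) (Fin m) ℂ :=
  A - Sh n * A * (Sh m)ᴴ

/-- Asymmetric Toeplitz: constant along diagonals. -/
noncomputable def IsAT {n m : ℕ} (A : Matrix (Fin n) (Fin m) ℂ) : Prop :=
  ∀ (i : Fin n) (j : Fin m) (hi : (i : ℕ) + 1 < n) (hj : (j : ℕ) + 1 < m),
    A ⟨(i : ℕ) + 1, hi⟩ ⟨(j : ℕ) + 1, hj⟩ = A i j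

/-- Asymmetric Hankel: constant along antidiagonals. -/
noncomputable def IsAH {n m : ℕ} (A : Matrix (Fin n) (Fin m) ℂ) : Prop :=
  ∀ (i : Fin n) (j : Fin m) (hi : (i : ℕ) + 1 < n) (hj : (j : ℕ) + 1 < m),
    A ⟨(i : ℕ) + 1, hi⟩ j = A i ⟨(j : ℕ) + 1, hj⟩

/-- The asymmetric Toeplitz matrix A(a,α) with zero diagonal. -/
noncomputable def aT {n m : ℕ} (a : Fin n → ℂ) (α : Fin m → ℂ) : Matrix (Fin n) (Fin m) ℂ :=
  Matrix.of fun i j =>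
    if (j : ℕ) < (i : ℕ) then
      a ⟨(i : ℕ) - (j : ℕ), lt_of_le_of_lt (Nat.sub_le _ _) i.isLt⟩
    else if (i : ℕ) < (j : ℕ) then
      star (α ⟨(j : ℕ) - (i : ℕ), lt_of_le_of_lt (Nat.sub_le _ _) j.isLt⟩)
    else 0

lemma Sh_mul_apply {n m : ℕ} (A : Matrix (Fin n) (Fin m) ℂ) (i : Fin n) (k : Fin m) :
    (Sh n * A) i k =
      if _ : 0 < (i : ℕ) then
        A ⟨(i : ℕ) - 1, lt_of_le_of_lt (Nat.sub_le _ _) i.isLt⟩ k else 0 := by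
  rw [Matrix.mul_apply]
  split
  · rename_i h
    set i' : Fin n := ⟨(i : ℕ) - 1, lt_of_le_of_lt (Nat.sub_le _ _) i.isLt⟩ with hi'
    have hcond : ∀ p : Fin n, ((i : ℕ) = (p : ℕ) + 1) ↔ p = i' := by
      intro p
      rw [Fin.ext_iff]
      simp only [hi']
      omega
    calc ∑ p, Sh n i p * A p k
        = ∑ p, (if p = i' then (1 : ℂ) else 0) * A p k := by
          refine Finset.sum_congr rfl fun p _ => ?_
          simp only [Sh, Matrix.of_apply, hcond p]
      _ = A i' k := by simp
  · rename_i h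
    have : ∀ p : Fin n, Sh n i p = 0 := by
      intro p
      simp only [Sh, Matrix.of_apply, ite_eq_right_iff]
      intro hp
      omega
    simp [this]

lemma mul_ShH_apply {n m : ℕ} (B : Matrix (Fin n) (Fin m) ℂ) (i : Fin n) (j : Fin m) :
    (B * (Sh m)ᴴ) i j =
      if _ : 0 < (j : ℕ) then
        B i ⟨(j : ℕ) - 1, lt_of_le_of_lt (Nat.sub_le _ _) j.isLt⟩ else 0 := by
  rw [Matrix.mul_apply]
  split
  · rename_i h
    set j' : Fin m := ⟨(j : ℕ) - 1, lt_of_le_of_lt (Nat.sub_le _ _) j.isLt⟩ with hj'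
    have hcond : ∀ k : Fin m, ((j : ℕ) = (k : ℕ) + 1) ↔ k = j' := by
      intro k
      rw [Fin.ext_iff]
      simp only [hj']
      omega
    calc ∑ k, B i k * (Sh m)ᴴ k j
        = ∑ k, B i k * (if k = j' then (1 : ℂ) else 0) := by
          refine Finset.sum_congr rfl fun k _ => ?_
          have : (Sh m)ᴴ k j = if k = j' then (1 : ℂ) else 0 := by
            simp only [Matrix.conjTranspose_apply, Sh, Matrix.of_apply,
              apply_ite (star : ℂ → ℂ), star_one, star_zero, hcond k]
          rw [this]
      _ = B i j' := by simp
  · rename_i h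
    refine Finset.sum_eq_zero fun k _ => ?_
    have h0 : Sh m j k = 0 := by
      simp only [Sh, Matrix.of_apply, ite_eq_right_iff]
      intro hp
      omega
    simp [Matrix.conjTranspose_apply, h0]

lemma dsp_apply {n m : ℕ} (A : Matrix (Fin n) (Fin m) ℂ) (i : Fin n) (j : Fin m) :
    dsp A i j = A i j -
      if _ : 0 < (i : ℕ) ∧ 0 < (j : ℕ) then
        A ⟨(i : ℕ) - 1, lt_of_le_of_lt (Nat.sub_le _ _) i.isLt⟩
          ⟨(j : ℕ) - 1, lt_of_le_of_lt (Nat.sub_le _ _) j.isLt⟩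
      else 0 := by
  have : (Sh n * A * (Sh m)ᴴ) i j =
      if _ : 0 < (i : ℕ) ∧ 0 < (j : ℕ) then
        A ⟨(i : ℕ) - 1, lt_of_le_of_lt (Nat.sub_le _ _) i.isLt⟩
          ⟨(j : ℕ) - 1, lt_of_le_of_lt (Nat.sub_le _ _) j.isLt⟩
      else 0 := by
    rw [mul_ShH_apply, ]
    by_cases hj : 0 < (j : ℕ)
    · rw [dif_pos hj, Sh_mul_apply]
      by_cases hi : 0 < (i : ℕ)
      · rw [dif_pos hi, dif_pos ⟨hi, hj⟩]
      · rw [dif_neg hi, dif_neg (by tauto)]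
    · rw [dif_neg hj, dif_neg (by tauto)]
  simp only [dsp, Matrix.sub_apply, this]

theorem stmt1 {n m : ℕ} (hn : 0 < n) (hm : 0 < m) (A : Matrix (Fin n) (Fin m) ℂ) :
    IsAT A ↔ ∃ (u : Fin n → ℂ) (v : Fin m → ℂ),
      dsp A = oprod u (Pi.single (⟨0, hm⟩ : Fin m) 1) +
              oprod (Pi.single (⟨0, hn⟩ : Fin n) 1) v := by
  set eN : Fin n := ⟨0, hn⟩ with heN
  set eM : Fin m := ⟨0, hm⟩ with heM
  constructor
  · intro hA
    refine ⟨fun i => dsp A i eM,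
      fun j => if j = eM then 0 else star (dsp A eN j), ?_⟩
    ext i j
    simp only [Matrix.add_apply, oprod, Matrix.of_apply]
    rw [Pi.single_apply, Pi.single_apply]
    by_cases hj : j = eM
    · subst hj
      simp
    · rw [if_neg hj, if_neg hj]
      by_cases hi : i = eN
      · subst hi
        simp
      · simp only [star_zero, mul_zero, if_neg hi, zero_mul, add_zero, zero_add]
        have hi0 : 0 < (i : ℕ) := by
          rcases Nat.eq_zero_or_pos (i : ℕ) with h | h
          · exact absurd (Fin.ext h) hi
          · exact h
        have hj0 : 0 < (j : ℕ) := by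
          rcases Nat.eq_zero_or_pos (j : ℕ) with h | h
          · exact absurd (Fin.ext h) hj
          · exact h
        rw [dsp_apply, dif_pos ⟨hi0, hj0⟩, sub_eq_zero]
        have key := hA ⟨(i : ℕ) - 1, lt_of_le_of_lt (Nat.sub_le _ _) i.isLt⟩
          ⟨(j : ℕ) - 1, lt_of_le_of_lt (Nat.sub_le _ _) j.isLt⟩
          (by show (i : ℕ) - 1 + 1 < n; have := i.isLt; omega)
          (by show (j : ℕ) - 1 + 1 < m; have := j.isLt; omega)
        convert key using 2
        · exact Fin.ext (show (i : ℕ) = (i : ℕ) - 1 + 1 by omega)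
        · exact Fin.ext (show (j : ℕ) = (j : ℕ) - 1 + 1 by omega)
  · rintro ⟨u, v, h⟩
    intro i j hi hj
    have h1 := congrFun (congrFun h ⟨(i : ℕ) + 1, hi⟩) ⟨(j : ℕ) + 1, hj⟩
    rw [dsp_apply] at h1
    have hpos : 0 < ((⟨(i : ℕ) + 1, hi⟩ : Fin n) : ℕ) ∧
        0 < ((⟨(j : ℕ) + 1, hj⟩ : Fin m) : ℕ) := by constructor <;> simp
    rw [dif_pos hpos] at h1
    simp only [Matrix.add_apply, oprod, Matrix.of_apply] at h1
    rw [Pi.single_apply, Pi.single_apply] at h1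
    rw [if_neg (by simp [heM, Fin.ext_iff]), if_neg (by simp [heN, Fin.ext_iff])] at h1
    simp only [star_zero, mul_zero, zero_mul, add_zero] at h1
    rw [sub_eq_zero] at h1
    exact h1
end

section
/- Let A = A_0 + a_0 I_{n×m} with A_0 = A(a,α), and B = B_0 + b_0 I_{m×l} with B_0 = A(b,β), be nonzero asymmetric Toeplitz matrices, where max(n,l) ≤ m. Then AB is an n×l asymmetric Toeplitz matrix if and only if a ⊗ β = α̂_{(m,n)} ⊗ b̂_{(m,l)}, where α̂_{(m,n)} = (0, ᾱ_{m-1}, ..., ᾱ_{m-n+1})^T ∈ C^n and b̂_{(m,l)} = (0, b̄_{m-1}, ..., b̄_{m-l+1})^T ∈ C^l. -/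
open Matrix BigOperators

lemma sum_diff_shift {m : ℕ} (hm : 0 < m) (F G : ℕ → ℂ)
    (h : ∀ k, k + 1 < m → F (k + 1) = G k) :
    (∑ k ∈ Finset.range m, F k) - (∑ k ∈ Finset.range m, G k) = F 0 - G (m - 1) := by
  obtain ⟨m', rfl⟩ := Nat.exists_eq_succ_of_ne_zero hm.ne'
  rw [Finset.sum_range_succ' F, Finset.sum_range_succ G]
  have e : ∑ k ∈ Finset.range m', F (k + 1) = ∑ k ∈ Finset.range m', G k :=
    Finset.sum_congr rfl fun k hk => h k (Nat.succ_lt_succ (Finset.mem_range.mp hk))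
  rw [e]
  simp [Nat.succ_sub_one]

lemma entry_lt {p q : ℕ} (x : Fin p → ℂ) (y : Fin q → ℂ) (c : ℂ) (i : Fin p) (j : Fin q)
    (h : (j : ℕ) < (i : ℕ)) :
    (aT x y + c • rId p q) i j
      = x ⟨(i : ℕ) - (j : ℕ), lt_of_le_of_lt (Nat.sub_le _ _) i.isLt⟩ := by
  simp [aT, rId, Matrix.add_apply, h, Nat.ne_of_gt h]

lemma entry_gt {p q : ℕ} (x : Fin p → ℂ) (y : Fin q → ℂ) (c : ℂ) (i : Fin p) (j : Fin q)
    (h : (i : ℕ) < (j : ℕ)) :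
    (aT x y + c • rId p q) i j
      = star (y ⟨(j : ℕ) - (i : ℕ), lt_of_le_of_lt (Nat.sub_le _ _) j.isLt⟩) := by
  simp [aT, rId, Matrix.add_apply, h, Nat.ne_of_lt h, Nat.lt_asymm h]

lemma entry_shift {p q : ℕ} (x : Fin p → ℂ) (y : Fin q → ℂ) (c : ℂ) (i j : ℕ)
    (hi : i + 1 < p) (hj : j + 1 < q) :
    (aT x y + c • rId p q) ⟨i + 1, hi⟩ ⟨j + 1, hj⟩
      = (aT x y + c • rId p q) ⟨i, by omega⟩ ⟨j, by omega⟩ := by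
  rcases lt_trichotomy j i with h | h | h
  · rw [entry_lt _ _ _ _ _ (by simpa using Nat.succ_lt_succ h), entry_lt _ _ _ _ _ h]
    congr 1
    exact Fin.ext (by simp)
  · subst h
    simp [aT, rId, Matrix.add_apply]
  · rw [entry_gt _ _ _ _ _ (by simpa using Nat.succ_lt_succ h), entry_gt _ _ _ _ _ h]
    congr 2
    exact Fin.ext (by simp)

theorem stmt11 {n m l : ℕ} (hn : 0 < n) (hl : 0 < l) (hnm : n ≤ m) (hlm : l ≤ m)
    (a0 b0 : ℂ) (a : Fin n → ℂ) (α : Fin m → ℂ) (b : Fin m → ℂ) (β : Fin l → ℂ)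
    (ha : a ⟨0, hn⟩ = 0) (hα : α ⟨0, hn.trans_le hnm⟩ = 0)
    (hb : b ⟨0, hn.trans_le hnm⟩ = 0) (hβ : β ⟨0, hl⟩ = 0)
    (A : Matrix (Fin n) (Fin m) ℂ) (B : Matrix (Fin m) (Fin l) ℂ)
    (hA : A = aT a α + a0 • rId n m) (hB : B = aT b β + b0 • rId m l)
    (hA0 : A ≠ 0) (hB0 : B ≠ 0) :
    IsAT (A * B) ↔
      oprod a β = oprod (fun i : Fin n => if h : (i : ℕ) = 0 then 0
          else star (α ⟨m - (i : ℕ), Nat.sub_lt (hn.trans_le hnm) (Nat.pos_of_ne_zero h)⟩)) (fun j : Fin l => if h : (j : ℕ) = 0 then 0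
          else star (b ⟨m - (j : ℕ), Nat.sub_lt (hn.trans_le hnm) (Nat.pos_of_ne_zero h)⟩)) := by
  subst hA
  subst hB
  have hm : 0 < m := hn.trans_le hnm
  set A := aT a α + a0 • rId n m with hA
  set B := aT b β + b0 • rId m l with hB
  have key : ∀ (iv jv : ℕ) (hi : iv + 1 < n) (hj : jv + 1 < l),
      (A * B) ⟨iv + 1, hi⟩ ⟨jv + 1, hj⟩ - (A * B) ⟨iv, by omega⟩ ⟨jv, by omega⟩
        = a ⟨iv + 1, hi⟩ * star (β ⟨jv + 1, hj⟩)
          - star (α ⟨m - 1 - iv, by omega⟩) * b ⟨m - 1 - jv, by omega⟩ := by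
    intro iv jv hi hj
    set F : ℕ → ℂ := fun k => if h : k < m then
        A ⟨iv + 1, hi⟩ ⟨k, h⟩ * B ⟨k, h⟩ ⟨jv + 1, hj⟩ else 0 with hF
    set G : ℕ → ℂ := fun k => if h : k < m then
        A ⟨iv, by omega⟩ ⟨k, h⟩ * B ⟨k, h⟩ ⟨jv, by omega⟩ else 0 with hG
    have h1 : (A * B) ⟨iv + 1, hi⟩ ⟨jv + 1, hj⟩ = ∑ k ∈ Finset.range m, F k := by
      rw [Matrix.mul_apply, ← Fin.sum_univ_eq_sum_range F m]
      exact Finset.sum_congr rfl fun k _ => by simp [hF, k.isLt]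
    have h2 : (A * B) ⟨iv, by omega⟩ ⟨jv, by omega⟩ = ∑ k ∈ Finset.range m, G k := by
      rw [Matrix.mul_apply, ← Fin.sum_univ_eq_sum_range G m]
      exact Finset.sum_congr rfl fun k _ => by simp [hG, k.isLt]
    have hsh : ∀ k, k + 1 < m → F (k + 1) = G k := by
      intro k hk
      simp only [hF, hG, dif_pos hk, dif_pos (show k < m by omega)]
      rw [hA, hB, entry_shift, entry_shift]
    rw [h1, h2, sum_diff_shift hm F G hsh]
    have hF0 : F 0 = a ⟨iv + 1, hi⟩ * star (β ⟨jv + 1, hj⟩) := by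
      rw [hF]
      simp only [dif_pos hm]
      rw [hA, hB, entry_lt _ _ _ _ _ (show ((⟨0, hm⟩ : Fin m) : ℕ) < iv + 1 by simp),
        entry_gt _ _ _ _ _ (show ((⟨0, hm⟩ : Fin m) : ℕ) < jv + 1 by simp)]
      simp
    have hGm : G (m - 1) = star (α ⟨m - 1 - iv, by omega⟩) * b ⟨m - 1 - jv, by omega⟩ := by
      rw [hG]
      simp only [dif_pos (show m - 1 < m by omega)]
      rw [hA, hB, entry_gt _ _ _ _ _ (show iv < ((⟨m - 1, by omega⟩ : Fin m) : ℕ) by simp; omega),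
        entry_lt _ _ _ _ _ (show jv < ((⟨m - 1, by omega⟩ : Fin m) : ℕ) by simp; omega)]
    rw [hF0, hGm]
  have hmain : IsAT (A * B) ↔ ∀ (iv jv : ℕ) (hi : iv + 1 < n) (hj : jv + 1 < l),
      a ⟨iv + 1, hi⟩ * star (β ⟨jv + 1, hj⟩)
        = star (α ⟨m - 1 - iv, by omega⟩) * b ⟨m - 1 - jv, by omega⟩ := by
    constructor
    · intro hT iv jv hi hj
      exact sub_eq_zero.mp
        (((sub_eq_zero.mpr (hT ⟨iv, by omega⟩ ⟨jv, by omega⟩ hi hj)).symm.trans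
          (key iv jv hi hj)).symm)
    · intro h i j hi hj
      exact sub_eq_zero.mp ((key (i : ℕ) (j : ℕ) hi hj).trans (sub_eq_zero.mpr (h _ _ hi hj)))
  rw [hmain]
  constructor
  · intro h
    ext i j
    obtain ⟨iv, hilt⟩ := i
    obtain ⟨jv, hjlt⟩ := j
    simp only [oprod, Matrix.of_apply]
    rcases Nat.eq_zero_or_pos iv with rfl | hiv
    · have h0 : a ⟨0, hilt⟩ = 0 := ha
      simp [h0]
    rcases Nat.eq_zero_or_pos jv with rfl | hjv
    · have h0 : β ⟨0, hjlt⟩ = 0 := hβ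
      simp [h0]
    have hk := h (iv - 1) (jv - 1) (by omega) (by omega)
    rw [show (⟨iv - 1 + 1, by omega⟩ : Fin n) = ⟨iv, hilt⟩ from Fin.mk_eq_mk.mpr (by omega),
      show (⟨jv - 1 + 1, by omega⟩ : Fin l) = ⟨jv, hjlt⟩ from Fin.mk_eq_mk.mpr (by omega),
      show (⟨m - 1 - (iv - 1), by omega⟩ : Fin m) = ⟨m - iv, by omega⟩ from Fin.mk_eq_mk.mpr (by omega),
      show (⟨m - 1 - (jv - 1), by omega⟩ : Fin m) = ⟨m - jv, by omega⟩ from Fin.mk_eq_mk.mpr (by omega)]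
        at hk
    rw [dif_neg (by simpa using hiv.ne'), dif_neg (by simpa using hjv.ne'), star_star]
    exact hk
  · intro h iv jv hi hj
    have hk := Matrix.ext_iff.mpr h ⟨iv + 1, hi⟩ ⟨jv + 1, hj⟩
    simp only [oprod, Matrix.of_apply] at hk
    rw [dif_neg (by simp), dif_neg (by simp), star_star] at hk
    rw [show (⟨m - (iv + 1), by omega⟩ : Fin m) = ⟨m - 1 - iv, by omega⟩ from Fin.mk_eq_mk.mpr (by omega),
      show (⟨m - (jv + 1), by omega⟩ : Fin m) = ⟨m - 1 - jv, by omega⟩ from Fin.mk_eq_mk.mpr (by omega)]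
        at hk
    exact hk
end

section
/- Let A = A(a,α) + a_0 I_{n×m} and B = A(b,β) + b_0 I_{m×l} be asymmetric Toeplitz matrices with max(n,l) ≤ m. If a = 0 and α̂_{(m,n)} = 0, i.e. the first row of A is zero past column m−n (so it is supported in its first m−n+1 entries), then AB is an n×l asymmetric Toeplitz matrix. -/
open Matrix BigOperators

lemma aT_shift {n m : ℕ} (a : Fin n → ℂ) (α : Fin m → ℂ) (i : Fin n) (j : Fin m)
    (hi : (i : ℕ) + 1 < n) (hj : (j : ℕ) + 1 < m) :
    aT a α ⟨(i : ℕ) + 1, hi⟩ ⟨(j : ℕ) + 1, hj⟩ = aT a α i j := by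
  simp only [aT, Matrix.of_apply, Nat.add_lt_add_iff_right, Nat.succ_sub_succ]

lemma rId_shift {n m : ℕ} (i : Fin n) (j : Fin m)
    (hi : (i : ℕ) + 1 < n) (hj : (j : ℕ) + 1 < m) :
    rId n m ⟨(i : ℕ) + 1, hi⟩ ⟨(j : ℕ) + 1, hj⟩ = rId n m i j := by
  simp only [rId, Matrix.of_apply, Nat.add_right_cancel_iff]

theorem stmt12 {n m l : ℕ} (hn : 0 < n) (hl : 0 < l) (hnm : n ≤ m) (hlm : l ≤ m)
    (a0 b0 : ℂ) (a : Fin n → ℂ) (α : Fin m → ℂ) (b : Fin m → ℂ) (β : Fin l → ℂ)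
    (ha : a ⟨0, hn⟩ = 0) (hα : α ⟨0, hn.trans_le hnm⟩ = 0)
    (hb : b ⟨0, hn.trans_le hnm⟩ = 0) (hβ : β ⟨0, hl⟩ = 0)
    (A : Matrix (Fin n) (Fin m) ℂ) (B : Matrix (Fin m) (Fin l) ℂ)
    (hA : A = aT a α + a0 • rId n m) (hB : B = aT b β + b0 • rId m l)
    (ha0 : a = 0) (hαtail : ∀ k : Fin m, m - n < (k : ℕ) → α k = 0) :
    IsAT (A * B) := by
  obtain ⟨m', rfl⟩ : ∃ m', m = m' + 1 := ⟨m - 1, by omega⟩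
  intro i j hi hj
  have hAsh : ∀ (i' : Fin n) (k : Fin (m'+1)) (hi' : (i' : ℕ) + 1 < n)
      (hk : (k : ℕ) + 1 < m' + 1),
      A ⟨(i' : ℕ) + 1, hi'⟩ ⟨(k : ℕ) + 1, hk⟩ = A i' k := by
    intro i' k hi' hk
    rw [hA]
    simp only [Matrix.add_apply, Matrix.smul_apply, aT_shift, rId_shift]
  have hBsh : ∀ (k : Fin (m'+1)) (j' : Fin l) (hk : (k : ℕ) + 1 < m' + 1)
      (hj' : (j' : ℕ) + 1 < l),
      B ⟨(k : ℕ) + 1, hk⟩ ⟨(j' : ℕ) + 1, hj'⟩ = B k j' := by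
    intro k j' hk hj'
    rw [hB]
    simp only [Matrix.add_apply, Matrix.smul_apply, aT_shift, rId_shift]
  have hA0 : A ⟨(i : ℕ)+1, hi⟩ (0 : Fin (m'+1)) = 0 := by
    subst hA ha0
    simp [aT, rId, Matrix.add_apply, Matrix.smul_apply]
  have hAlast : A i (Fin.last m') = 0 := by
    subst hA
    have h1 : (i : ℕ) < m' := by omega
    have h2 : α ⟨m' - (i : ℕ), by omega⟩ = 0 := by
      apply hαtail
      simp; omega
    simp [aT, rId, Matrix.add_apply, Matrix.smul_apply, Fin.last, h1,
      Nat.lt_asymm h1, (Nat.ne_of_lt h1), h2]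
  rw [Matrix.mul_apply, Matrix.mul_apply, Fin.sum_univ_succ, Fin.sum_univ_castSucc,
    hA0, hAlast]
  simp only [zero_mul, mul_zero, zero_add, add_zero]
  apply Finset.sum_congr rfl
  intro k _
  have e1 : (Fin.succ k : Fin (m'+1)) = ⟨((k.castSucc : Fin (m'+1)) : ℕ) + 1, Nat.succ_lt_succ k.isLt⟩ := rfl
  rw [e1, hAsh _ _ hi, hBsh _ _ _ hj]
end
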